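/- Let K be a field and let a ≥ 3 be an integer. Let β be the 2×6 matrix over the polynomial ring K[x,y,z,w] with first row (x, 0, w^{2a−1}, z^{2a−1}, y^{a−1}, z^{a+1}) and second row (y, x, z^{2a−1}, w^{2a−1}, x^{a−1}, 0). Then for every point p = (x₀,y₀,z₀,w₀) ∈ K⁴ with p ≠ (0,0,0,0), the 2×6 matrix over K obtained by evaluating every entry of β at p has rank 2; equivalently, the induced linear map K⁶ → K² is surjective. -/
import Mathlib

open MvPolynomial

/-- The right-hand matrix β of the monad, over `K[x,y,z,w]` with
variables `x = X 0`, `y = X 1`, `z = X 2`, `w = X 3`. -/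
noncomputable def betaMat (K : Type*) [Field K] (a : ℕ) :
    Matrix (Fin 2) (Fin 6) (MvPolynomial (Fin 4) K) :=
  !![X 0, 0, (X 3) ^ (2 * a - 1), (X 2) ^ (2 * a - 1), (X 1) ^ (a - 1), (X 2) ^ (a + 1);
     X 1, X 0, (X 2) ^ (2 * a - 1), (X 3) ^ (2 * a - 1), (X 0) ^ (a - 1), 0]


lemma cv0 {α : Type*} (a b c d e f : α) : ![a,b,c,d,e,f] 0 = a := rfl
lemma cv1 {α : Type*} (a b c d e f : α) : ![a,b,c,d,e,f] 1 = b := rfl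
lemma cv2 {α : Type*} (a b c d e f : α) : ![a,b,c,d,e,f] 2 = c := rfl
lemma cv3 {α : Type*} (a b c d e f : α) : ![a,b,c,d,e,f] 3 = d := rfl
lemma cv4 {α : Type*} (a b c d e f : α) : ![a,b,c,d,e,f] 4 = e := rfl
lemma cv5 {α : Type*} (a b c d e f : α) : ![a,b,c,d,e,f] 5 = f := rfl

open Matrix in
lemma surj2 {K : Type*} [Field K] (M : Matrix (Fin 2) (Fin 6) K) (v₁ v₂ : Fin 6 → K)
    (h1 : M.mulVec v₁ = ![1, 0]) (h2 : M.mulVec v₂ = ![0, 1]) :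
    Function.Surjective M.mulVecLin := by
  intro c
  refine ⟨c 0 • v₁ + c 1 • v₂, ?_⟩
  simp only [mulVecLin_apply, mulVec_add, mulVec_smul, h1, h2]
  funext i; fin_cases i <;> simp

/-- At every point `p = (x₀,y₀,z₀,w₀) ≠ 0` of `K⁴`, the evaluated matrix β(p)
has rank 2; equivalently, the induced linear map `K⁶ → K²` is surjective. -/
theorem beta_eval_rank_two (K : Type*) [Field K] (a : ℕ) (ha : 3 ≤ a)
    (x₀ y₀ z₀ w₀ : K) (hp : (x₀, y₀, z₀, w₀) ≠ (0, 0, 0, 0)) :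
    ((betaMat K a).map (eval ![x₀, y₀, z₀, w₀])).rank = 2 ∧
      Function.Surjective
        (((betaMat K a).map (eval ![x₀, y₀, z₀, w₀])).mulVecLin) := by
  have ham : a - 1 ≠ 0 := by omega
  have ham2 : a * 2 - 1 ≠ 0 := by omega
  have ham3 : 2 * a - 1 ≠ 0 := by omega
  have hN : (betaMat K a).map (eval ![x₀, y₀, z₀, w₀]) =
      !![x₀, 0, w₀ ^ (2 * a - 1), z₀ ^ (2 * a - 1), y₀ ^ (a - 1), z₀ ^ (a + 1);
         y₀, x₀, z₀ ^ (2 * a - 1), w₀ ^ (2 * a - 1), x₀ ^ (a - 1), 0] := by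
    ext i j; fin_cases i <;> fin_cases j <;> simp [betaMat, cv0, cv1, cv2, cv3, cv4, cv5, ham, ham2, ham3]
  rw [hN]
  set N : Matrix (Fin 2) (Fin 6) K :=
      !![x₀, 0, w₀ ^ (2 * a - 1), z₀ ^ (2 * a - 1), y₀ ^ (a - 1), z₀ ^ (a + 1);
         y₀, x₀, z₀ ^ (2 * a - 1), w₀ ^ (2 * a - 1), x₀ ^ (a - 1), 0] with hNdef
  have hs : Function.Surjective N.mulVecLin := by
    by_cases hx : x₀ = 0
    · by_cases hy : y₀ = 0
      · by_cases hz : z₀ = 0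
        · have hw : w₀ ≠ 0 := by
            intro h; exact hp (by simp [hx, hy, hz, h])
          apply surj2 N ![0, 0, 1 / w₀ ^ (2 * a - 1), 0, 0, 0]
            ![0, 0, 0, 1 / w₀ ^ (2 * a - 1), 0, 0] <;>
          · funext i; fin_cases i <;>
            · simp [hNdef, Matrix.mulVec, dotProduct, Fin.sum_univ_six, hx, hy, hz,
                zero_pow ham, cv0, cv1, cv2, cv3, cv4, cv5, ham, ham2, ham3]
              try field_simp
              try ring
        · apply surj2 N ![0, 0, 0, 0, 0, 1 / z₀ ^ (a + 1)]
            ![0, 0, 1 / z₀ ^ (2 * a - 1), 0, 0, -(w₀ ^ (2 * a - 1)) / (z₀ ^ (2 * a - 1) * z₀ ^ (a + 1))] <;>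
          · funext i; fin_cases i <;>
            · simp [hNdef, Matrix.mulVec, dotProduct, Fin.sum_univ_six, hx, hy,
                zero_pow ham, cv0, cv1, cv2, cv3, cv4, cv5, ham, ham2, ham3]
              try field_simp
              try ring
      · apply surj2 N ![0, 0, 0, 0, 1 / y₀ ^ (a - 1), 0] ![1 / y₀, 0, 0, 0, 0, 0] <;>
        · funext i; fin_cases i <;>
          · simp [hNdef, Matrix.mulVec, dotProduct, Fin.sum_univ_six, hx, zero_pow ham, cv0, cv1, cv2, cv3, cv4, cv5, ham, ham2, ham3]
            try field_simp
            try ring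
    · apply surj2 N ![1 / x₀, -y₀ / x₀ ^ 2, 0, 0, 0, 0] ![0, 1 / x₀, 0, 0, 0, 0] <;>
      · funext i; fin_cases i <;>
        · simp [hNdef, Matrix.mulVec, dotProduct, Fin.sum_univ_six, cv0, cv1, cv2, cv3, cv4, cv5, ham, ham2, ham3]
          try field_simp
          try ring
  refine ⟨?_, hs⟩
  have hr : LinearMap.range N.mulVecLin = ⊤ := LinearMap.range_eq_top.mpr hs
  rw [Matrix.rank, hr, finrank_top]
  simp
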